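/- Generalized bilinear formula: as formal power series in x, y, z, sum_{l,m,n>=0} C_{l+m}(a,r) * C_{l+n}(b,s) * x^l y^m z^n / (l! m! n!) = e^(r*s*x + r*y + s*z) * sum_{l>=0} (a)_l (b)_l x^l / (l! * (1-s*x-y)^(l+a) * (1-r*x-z)^(l+b)). -/

import Mathlib

/-!
Umbral argument. Let `Φ` be the `R`-linear map on `R[x, y]` sending `x ^ u * y ^ v` to
`(a)_u (b)_v`. Expanding binomially, `C_n(a,r) C_m(b,s) = Φ((x + r) ^ n * (y + s) ^ m)`.
On the other side `(a)_l (a + l)_k = (a)_(l + k)`, so the right-hand side is `Φ` of the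
multinomial expansion of
`(x + r) ^ (L + M) * (y + s) ^ (L + N) = (x y + r s + s x + r y) ^ L * (x + r) ^ M * (y + s) ^ N`,
divided by `L! M! N!`.
-/

open Finset

noncomputable def rf {R : Type*} [CommRing R] (a : R) (k : ℕ) : R :=
  (ascPochhammer R k).eval a

noncomputable def Ch {R : Type*} [CommRing R] (a r : R) (n : ℕ) : R :=
  ∑ k ∈ Finset.range (n + 1), (n.choose k : R) * rf a k * r ^ (n - k)

open Nat MvPolynomial

theorem rf_add {R : Type*} [CommRing R] (a : R) (m n : ℕ) :
    rf a (m + n) = rf a m * rf (a + m) n := by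
  simpa [rf, Polynomial.eval_comp] using
    congrArg (Polynomial.eval a) (ascPochhammer_mul R m n).symm

theorem cast_choose_mul_choose_mul_choose {K : Type*} [Field K] [CharZero K] {l p i L : ℕ}
    (h : l + p + i ≤ L) :
    ((L.choose l * (L - l).choose p * (L - l - p).choose i : ℕ) : K) =
      L ! / (l ! * p ! * i ! * (L - l - p - i)!) := by
  push_cast
  rw [cast_choose K (by omega : l ≤ L), cast_choose K (by omega : p ≤ L - l),
    cast_choose K (by omega : i ≤ L - l - p)]
  have h₁ : ((L - l)! : K) ≠ 0 := Nat.cast_ne_zero.mpr (factorial_ne_zero _)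
  have h₂ : ((L - l - p)! : K) ≠ 0 := Nat.cast_ne_zero.mpr (factorial_ne_zero _)
  field_simp

theorem inv_factorial_smul_add_pow_mul_add_pow {A : Type*} [CommSemiring A] [Algebra ℚ A]
    (x y r s : A) (L M N : ℕ) :
    ((L ! * M ! * N ! : ℕ) : ℚ)⁻¹ • ((x + r) ^ (L + M) * (y + s) ^ (L + N)) =
      ∑ l ∈ range (L + 1), ∑ p ∈ range (L - l + 1), ∑ i ∈ range (L - l - p + 1),
        ∑ j ∈ range (M + 1), ∑ j' ∈ range (N + 1),
          ((l ! * p ! * i ! * (L - l - p - i)! * (j ! * (M - j)!) * (j' ! * (N - j')!) : ℕ) : ℚ)⁻¹ •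
            (x ^ (l + i + j) * y ^ (l + (L - l - p - i) + j') *
              r ^ (p + (L - l - p - i) + (M - j)) * s ^ (p + i + (N - j'))) := by
  -- The factors are ordered so that `simp` pulls out the sums in the order `l, p, i, j, j'`.
  have hfactor : (x + r) ^ (L + M) * (y + s) ^ (L + N) =
      (y + s) ^ N * (x + r) ^ M * (x * y + (r * s + (s * x + r * y))) ^ L := by
    rw [pow_add, pow_add, show x * y + (r * s + (s * x + r * y)) = (x + r) * (y + s) by ring,
      mul_pow]
    ring
  rw [hfactor]
  simp only [add_pow, sum_mul, mul_sum, smul_sum]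
  refine sum_congr rfl fun l hl => sum_congr rfl fun p hp => sum_congr rfl fun i hi =>
    sum_congr rfl fun j hj => sum_congr rfl fun j' hj' => ?_
  simp only [mem_range] at hl hp hi hj hj'
  have hcoeff : ((L ! * M ! * N ! : ℕ) : ℚ)⁻¹ *
      ((L.choose l * (L - l).choose p * (L - l - p).choose i : ℕ) * M.choose j * N.choose j') =
      ((l ! * p ! * i ! * (L - l - p - i)! * (j ! * (M - j)!) * (j' ! * (N - j')!) : ℕ) : ℚ)⁻¹ := by
    rw [cast_choose_mul_choose_mul_choose (by omega), cast_choose ℚ (by omega : j ≤ M),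
      cast_choose ℚ (by omega : j' ≤ N)]
    push_cast
    field_simp
  rw [← hcoeff, Algebra.smul_def, Algebra.smul_def]
  simp only [map_mul, map_natCast, Nat.cast_mul]
  ring

section Umbral

variable {R : Type*} [CommSemiring R]

noncomputable def umbralEval (g h : ℕ → R) : MvPolynomial (Fin 2) R →ₗ[R] R :=
  (basisMonomials (Fin 2) R).constr R fun e => g (e 0) * h (e 1)

theorem umbralEval_C_mul_X_pow_mul_X_pow (g h : ℕ → R) (c : R) (u v : ℕ) :
    umbralEval g h (C c * X 0 ^ u * X 1 ^ v) = c * g u * h v := by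
  have hmon : C c * X 0 ^ u * X 1 ^ v =
      c • basisMonomials (Fin 2) R (Finsupp.single 0 u + Finsupp.single 1 v) := by
    rw [coe_basisMonomials, smul_monomial, X_pow_eq_monomial, X_pow_eq_monomial, C_mul_monomial,
      monomial_mul]
    simp
  rw [hmon, umbralEval, map_smul, Module.Basis.constr_basis]
  simp [smul_eq_mul, mul_assoc]

end Umbral

theorem umbralEval_rf_add_pow_mul_add_pow {R : Type*} [CommRing R] (a b r s : R) (n m : ℕ) :
    umbralEval (rf a) (rf b) ((X 0 + C r) ^ n * (X 1 + C s) ^ m) = Ch a r n * Ch b s m := by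
  rw [add_pow, add_pow, sum_mul_sum, map_sum, Ch, Ch, sum_mul_sum]
  refine sum_congr rfl fun u _ => ?_
  rw [map_sum]
  refine sum_congr rfl fun v _ => ?_
  have hmon : X 0 ^ u * C r ^ (n - u) * (n.choose u : MvPolynomial (Fin 2) R) *
      (X 1 ^ v * C s ^ (m - v) * (m.choose v : MvPolynomial (Fin 2) R)) =
      C (n.choose u * r ^ (n - u) * (m.choose v * s ^ (m - v))) * X 0 ^ u * X 1 ^ v := by
    simp only [map_mul, map_pow, map_natCast]
    ring
  rw [hmon, umbralEval_C_mul_X_pow_mul_X_pow]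
  ring

/-- The identity is stated coefficientwise: the coefficient of `x^L y^M z^N` of the right-hand
side is computed with `e^w = ∑ w^p/p!` and `(1-w)^{-u} = ∑ (u)_d w^d/d!`, so that the coefficient
of `x^i y^j` in `(1-sx-y)^{-u}` is `(u)_{i+j} s^i/(i! j!)`. -/
theorem stmt12 {R : Type*} [CommRing R] [Algebra ℚ R] (a b r s : R) :
    ∀ L M N : ℕ,
      ((L.factorial * M.factorial * N.factorial : ℕ) : ℚ)⁻¹ •
          (Ch a r (L + M) * Ch b s (L + N)) =
        ∑ l ∈ Finset.range (L + 1), ∑ p ∈ Finset.range (L - l + 1),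
          ∑ i ∈ Finset.range (L - l - p + 1),
            ∑ j ∈ Finset.range (M + 1), ∑ j' ∈ Finset.range (N + 1),
              ((l.factorial : ℚ)⁻¹ • (rf a l * rf b l)) *
                ((p.factorial : ℚ)⁻¹ • (r * s) ^ p) *
                (((M - j).factorial : ℚ)⁻¹ • r ^ (M - j)) *
                (((N - j').factorial : ℚ)⁻¹ • s ^ (N - j')) *
                (((i.factorial * j.factorial : ℕ) : ℚ)⁻¹ •
                  (rf (a + (l : R)) (i + j) * s ^ i)) *
                ((((L - l - p - i).factorial * j'.factorial : ℕ) : ℚ)⁻¹ •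
                  (rf (b + (l : R)) ((L - l - p - i) + j') * r ^ (L - l - p - i))) := by
  intro L M N
  rw [← umbralEval_rf_add_pow_mul_add_pow, ← LinearMap.map_smul_of_tower,
    inv_factorial_smul_add_pow_mul_add_pow]
  simp only [map_sum]
  refine sum_congr rfl fun l _ => sum_congr rfl fun p _ => sum_congr rfl fun i _ =>
    sum_congr rfl fun j _ => sum_congr rfl fun j' _ => ?_
  set q := L - l - p - i
  have hmon : (X 0 : MvPolynomial (Fin 2) R) ^ (l + i + j) * X 1 ^ (l + q + j') *
      C r ^ (p + q + (M - j)) * C s ^ (p + i + (N - j')) =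
      C (r ^ (p + q + (M - j)) * s ^ (p + i + (N - j'))) *
        X 0 ^ (l + (i + j)) * X 1 ^ (l + (q + j')) := by
    simp only [map_mul, map_pow]
    ring
  rw [LinearMap.map_smul_of_tower, hmon, umbralEval_C_mul_X_pow_mul_X_pow, rf_add a l,
    rf_add b l]
  simp only [Algebra.smul_def, Nat.cast_mul, mul_inv, map_mul]
  ring
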